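/- arXiv:2009.00458 — 9 statements merged into one kernel-verified Lean document; each statement's English description precedes it below -/
import Mathlib

section
/- Let X and Y be metric spaces and R a correspondence between X and Y with dis R < ∞. For t ∈ (0,1) let R_t denote the set R with the distance |(x,y),(x',y')|_t = (1−t)·d(x,x') + t·d(y,y'), and set R_0 = X, R_1 = Y. Then each |·|_t is a metric on R, and for all s, t ∈ [0,1]: 2·d_GH(X, R_t) ≤ t·dis R, 2·d_GH(R_t, Y) ≤ (1−t)·dis R, 2·d_GH(R_s, R_t) ≤ |s−t|·dis R, and diam R_t ≤ max{diam X, diam Y}. -/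
open Metric Set
open scoped ENNReal

def IsCorrespondence {X Y : Type*} (R : Set (X × Y)) : Prop :=
  (∀ x : X, ∃ y : Y, (x, y) ∈ R) ∧ (∀ y : Y, ∃ x : X, (x, y) ∈ R)

noncomputable def corrDistortion {X Y : Type*} [MetricSpace X] [MetricSpace Y]
    (R : Set (X × Y)) : ℝ≥0∞ :=
  ⨆ p ∈ R, ⨆ q ∈ R, ENNReal.ofReal |dist p.1 q.1 - dist p.2 q.2|

noncomputable def ghDist (X Y : Type*) [MetricSpace X] [MetricSpace Y] : ℝ≥0∞ :=
  (⨅ (R : Set (X × Y)) (_ : IsCorrespondence R), corrDistortion R) / 2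

/-! Each point `p ∈ R` of a correspondence is seen both in `X` (through `p.1`) and in `Y`
(through `p.2`); the metric `(1 - t) d_X + t d_Y` on `R` moves linearly from one to the other,
so its distortion against `R_s` is `|s - t|` times that of `R`. Every comparison of two of these
spaces is then witnessed by the correspondence `{(f z, g z)}` of two surjections out of `R`. -/

section Distortion

variable {X Y : Type*} [MetricSpace X] [MetricSpace Y]

theorem two_mul_ghDist_le_corrDistortion {S : Set (X × Y)} (hS : IsCorrespondence S) :
    2 * ghDist X Y ≤ corrDistortion S := by
  rw [ghDist, ENNReal.mul_div_cancel two_ne_zero ENNReal.ofNat_ne_top]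
  exact iInf₂_le S hS

theorem le_corrDistortion {S : Set (X × Y)} {p q : X × Y} (hp : p ∈ S) (hq : q ∈ S) :
    ENNReal.ofReal |dist p.1 q.1 - dist p.2 q.2| ≤ corrDistortion S :=
  le_iSup₂_of_le p hp (le_iSup₂_of_le q hq le_rfl)

theorem two_mul_ghDist_le_of_surjective {Z : Type*} {f : Z → X} {g : Z → Y}
    (hf : f.Surjective) (hg : g.Surjective) {B : ℝ≥0∞}
    (h : ∀ z z', ENNReal.ofReal |dist (f z) (f z') - dist (g z) (g z')| ≤ B) :
    2 * ghDist X Y ≤ B := by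
  have hS : IsCorrespondence (range fun z => (f z, g z)) :=
    ⟨fun x => let ⟨z, hz⟩ := hf x; ⟨g z, z, Prod.ext hz rfl⟩,
      fun y => let ⟨z, hz⟩ := hg y; ⟨f z, z, Prod.ext rfl hz⟩⟩
  refine (two_mul_ghDist_le_corrDistortion hS).trans (iSup₂_le ?_)
  rintro _ ⟨z, rfl⟩
  refine iSup₂_le ?_
  rintro _ ⟨z', rfl⟩
  exact h z z'

end Distortion

namespace IsCorrespondence

variable {X Y : Type*} {R : Set (X × Y)}

theorem surjective_fst (hR : IsCorrespondence R) : (fun p : R => p.val.1).Surjective :=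
  fun x => let ⟨y, hy⟩ := hR.1 x; ⟨⟨(x, y), hy⟩, rfl⟩

theorem surjective_snd (hR : IsCorrespondence R) : (fun p : R => p.val.2).Surjective :=
  fun y => let ⟨x, hx⟩ := hR.2 y; ⟨⟨(x, y), hx⟩, rfl⟩

end IsCorrespondence

section Interpolation

variable {X Y : Type*} [MetricSpace X] [MetricSpace Y]

def interpDist (t : ℝ) (p q : X × Y) : ℝ :=
  (1 - t) * dist p.1 q.1 + t * dist p.2 q.2

@[simp]
theorem interpDist_zero (p q : X × Y) : interpDist 0 p q = dist p.1 q.1 := by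
  simp [interpDist]

@[simp]
theorem interpDist_one (p q : X × Y) : interpDist 1 p q = dist p.2 q.2 := by
  simp [interpDist]

theorem ofReal_abs_interpDist_sub_le {R : Set (X × Y)} {p q : X × Y} (hp : p ∈ R) (hq : q ∈ R)
    (s t : ℝ) :
    ENNReal.ofReal |interpDist s p q - interpDist t p q|
      ≤ ENNReal.ofReal |s - t| * corrDistortion R := by
  have h : interpDist s p q - interpDist t p q = (t - s) * (dist p.1 q.1 - dist p.2 q.2) := by
    unfold interpDist; ring
  rw [h, abs_mul, abs_sub_comm t s, ENNReal.ofReal_mul (abs_nonneg _)]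
  exact mul_le_mul_right (le_corrDistortion hp hq) _

theorem interpDist_le_max {t : ℝ} (ht : t ∈ Icc (0 : ℝ) 1) (p q : X × Y) :
    interpDist t p q ≤ max (dist p.1 q.1) (dist p.2 q.2) :=
  Convex.combo_le_max _ _ (sub_nonneg.2 ht.2) ht.1 (sub_add_cancel 1 t)

noncomputable abbrev interpMetricSpace (t : ℝ) (ht : t ∈ Ioo (0 : ℝ) 1) :
    MetricSpace (X × Y) where
  dist := interpDist t
  dist_self p := by simp [interpDist]
  dist_comm p q := by simp [interpDist, dist_comm]
  dist_triangle p q r := by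
    have h₁ := mul_le_mul_of_nonneg_left (dist_triangle p.1 q.1 r.1) (sub_nonneg.2 ht.2.le)
    have h₂ := mul_le_mul_of_nonneg_left (dist_triangle p.2 q.2 r.2) ht.1.le
    simp only [interpDist]
    linarith
  eq_of_dist_eq_zero {p q} h := by
    have h₁ := mul_nonneg (sub_nonneg.2 ht.2.le) (dist_nonneg (x := p.1) (y := q.1))
    have h₂ := mul_nonneg ht.1.le (dist_nonneg (x := p.2) (y := q.2))
    obtain ⟨h₁, h₂⟩ := (add_eq_zero_iff_of_nonneg h₁ h₂).1 h
    exact Prod.ext (dist_eq_zero.1 ((mul_eq_zero.1 h₁).resolve_left (sub_ne_zero.2 ht.2.ne')))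
      (dist_eq_zero.1 ((mul_eq_zero.1 h₂).resolve_left ht.1.ne'))

theorem edist_interpMetricSpace_le {t : ℝ} (ht : t ∈ Ioo (0 : ℝ) 1) (p q : X × Y) :
    @edist _ (interpMetricSpace t ht).toEDist p q
      ≤ max (ediam (univ : Set X)) (ediam (univ : Set Y)) :=
  calc @edist _ (interpMetricSpace t ht).toEDist p q
      = ENNReal.ofReal (interpDist t p q) :=
        @edist_dist _ (interpMetricSpace t ht).toPseudoMetricSpace p q
    _ ≤ ENNReal.ofReal (max (dist p.1 q.1) (dist p.2 q.2)) :=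
        ENNReal.ofReal_le_ofReal (interpDist_le_max (Ioo_subset_Icc_self ht) _ _)
    _ = max (edist p.1 q.1) (edist p.2 q.2) := by simp only [edist_dist, ENNReal.ofReal_max]
    _ ≤ _ := max_le_max (edist_le_ediam_of_mem (mem_univ _) (mem_univ _))
        (edist_le_ediam_of_mem (mem_univ _) (mem_univ _))

end Interpolation

theorem stmt1_general {X Y : Type*} [MetricSpace X] [MetricSpace Y]
    (R : Set (X × Y)) (hR : IsCorrespondence R) :
    ∃ M : ∀ t : ℝ, t ∈ Set.Ioo (0 : ℝ) 1 → MetricSpace ↥R,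
      (∀ t ht, ∀ p q : ↥R, @dist ↥R (M t ht).toPseudoMetricSpace.toDist p q
          = (1 - t) * dist p.val.1 q.val.1 + t * dist p.val.2 q.val.2) ∧
      (∀ t ht, 2 * @ghDist X ↥R _ (M t ht) ≤ ENNReal.ofReal t * corrDistortion R) ∧
      (∀ t ht, 2 * @ghDist ↥R Y (M t ht) _ ≤ ENNReal.ofReal (1 - t) * corrDistortion R) ∧
      (∀ s hs t ht, 2 * @ghDist ↥R ↥R (M s hs) (M t ht)
          ≤ ENNReal.ofReal |s - t| * corrDistortion R) ∧
      (2 * ghDist X Y ≤ corrDistortion R) ∧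
      (∀ t ht, @EMetric.diam ↥R (M t ht).toPseudoMetricSpace.toPseudoEMetricSpace Set.univ
          ≤ max (EMetric.diam (Set.univ : Set X)) (EMetric.diam (Set.univ : Set Y))) := by
  let M t ht : MetricSpace R := @Subtype.metricSpace _ _ (interpMetricSpace t ht)
  refine ⟨M, fun _ _ _ _ => rfl, fun t ht => ?_, fun t ht => ?_, fun s hs t ht => ?_,
    two_mul_ghDist_le_corrDistortion hR, fun t ht => ?_⟩
  · refine @two_mul_ghDist_le_of_surjective _ _ _ (M t ht) _ _ _ hR.surjective_fst
      Function.surjective_id _ fun p q => ?_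
    have h := ofReal_abs_interpDist_sub_le p.2 q.2 0 t
    rwa [interpDist_zero, zero_sub, abs_neg, abs_of_pos ht.1] at h
  · refine @two_mul_ghDist_le_of_surjective _ _ (M t ht) _ _ _ _ Function.surjective_id
      hR.surjective_snd _ fun p q => ?_
    have h := ofReal_abs_interpDist_sub_le p.2 q.2 t 1
    rwa [interpDist_one, abs_sub_comm t 1, abs_of_pos (sub_pos.2 ht.2)] at h
  · exact @two_mul_ghDist_le_of_surjective _ _ (M s hs) (M t ht) _ id id Function.surjective_id
      Function.surjective_id _ fun p q => ofReal_abs_interpDist_sub_le p.2 q.2 s t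
  · exact @ediam_le _ _ (M t ht).toPseudoEMetricSpace _ fun p _ q _ =>
      edist_interpMetricSpace_le ht p.val q.val

/-- interpolated metrics along a correspondence of finite distortion. -/
theorem stmt1 {X Y : Type*} [MetricSpace X] [MetricSpace Y]
    (R : Set (X × Y)) (hR : IsCorrespondence R) (hfin : corrDistortion R ≠ ⊤) :
    ∃ M : ∀ t : ℝ, t ∈ Set.Ioo (0 : ℝ) 1 → MetricSpace ↥R,
      (∀ t ht, ∀ p q : ↥R, @dist ↥R (M t ht).toPseudoMetricSpace.toDist p q
          = (1 - t) * dist p.val.1 q.val.1 + t * dist p.val.2 q.val.2) ∧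
      (∀ t ht, 2 * @ghDist X ↥R _ (M t ht) ≤ ENNReal.ofReal t * corrDistortion R) ∧
      (∀ t ht, 2 * @ghDist ↥R Y (M t ht) _ ≤ ENNReal.ofReal (1 - t) * corrDistortion R) ∧
      (∀ s hs t ht, 2 * @ghDist ↥R ↥R (M s hs) (M t ht)
          ≤ ENNReal.ofReal |s - t| * corrDistortion R) ∧
      (2 * ghDist X Y ≤ corrDistortion R) ∧
      (∀ t ht, @EMetric.diam ↥R (M t ht).toPseudoMetricSpace.toPseudoEMetricSpace Set.univ
          ≤ max (EMetric.diam (Set.univ : Set X)) (EMetric.diam (Set.univ : Set Y))) :=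
  stmt1_general R hR
end

section
/- Let C be a pseudometric space, x, w, y ∈ C with d(x,w) + d(w,y) = d(x,y), and let γ₁ be an ε-shortest curve from x to w and γ₂ an ε-shortest curve from w to y. Then for every point p on γ₁ and every point q on γ₂ one has d(p,w) + d(w,q) − d(p,q) ≤ 2ε. -/
open Set
open scoped ENNReal

private lemma two_dist_le {C : Type*} [PseudoMetricSpace C] (a b : C) (γ : ℝ → C) (L : ℝ)
    (hL : 0 ≤ L) (h0 : γ 0 = a) (h1 : γ 1 = b)
    (hlen : eVariationOn γ (Set.Icc 0 1) ≤ ENNReal.ofReal L)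
    {s : ℝ} (hs : s ∈ Set.Icc (0:ℝ) 1) :
    dist a (γ s) + dist (γ s) b ≤ L := by
  have key : edist a (γ s) + edist (γ s) b ≤ ENNReal.ofReal L := by
    set T := Set.Icc (0:ℝ) 1
    have hT1 : T ∩ Set.Icc 0 s = Set.Icc 0 s := by
      apply Set.inter_eq_right.2
      exact Set.Icc_subset_Icc le_rfl hs.2
    have hT2 : T ∩ Set.Icc s 1 = Set.Icc s 1 := by
      apply Set.inter_eq_right.2
      exact Set.Icc_subset_Icc hs.1 le_rfl
    have hT3 : T ∩ Set.Icc 0 1 = T := Set.inter_self T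
    have hsum := eVariationOn.Icc_add_Icc γ (s := T) hs.1 hs.2 ⟨hs.1, hs.2⟩
    rw [hT1, hT2, hT3] at hsum
    have h1e : edist (γ 0) (γ s) ≤ eVariationOn γ (Set.Icc 0 s) :=
      eVariationOn.edist_le γ (Set.left_mem_Icc.2 hs.1) (Set.right_mem_Icc.2 hs.1)
    have h2e : edist (γ s) (γ 1) ≤ eVariationOn γ (Set.Icc s 1) :=
      eVariationOn.edist_le γ (Set.left_mem_Icc.2 hs.2) (Set.right_mem_Icc.2 hs.2)
    calc edist a (γ s) + edist (γ s) b
        = edist (γ 0) (γ s) + edist (γ s) (γ 1) := by rw [h0, h1]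
      _ ≤ eVariationOn γ (Set.Icc 0 s) + eVariationOn γ (Set.Icc s 1) := add_le_add h1e h2e
      _ = eVariationOn γ T := hsum
      _ ≤ ENNReal.ofReal L := hlen
  have : ENNReal.ofReal (dist a (γ s) + dist (γ s) b) ≤ ENNReal.ofReal L := by
    rwa [ENNReal.ofReal_add dist_nonneg dist_nonneg, ← edist_dist, ← edist_dist]
  exact (ENNReal.ofReal_le_ofReal_iff hL).1 this

/-- if `w` lies between `x` and `y`, `γ₁` is an `ε`-shortest curve from `x`
to `w` and `γ₂` an `ε`-shortest curve from `w` to `y`, then any points `p` on `γ₁` and `q`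
on `γ₂` satisfy `d(p,w) + d(w,q) − d(p,q) ≤ 2ε`. -/
theorem stmt4 {C : Type*} [PseudoMetricSpace C] (x w y : C) (ε : ℝ) (hε : 0 ≤ ε)
    (hbtw : dist x w + dist w y = dist x y)
    (γ₁ γ₂ : ℝ → C)
    (h1cont : ContinuousOn γ₁ (Set.Icc 0 1)) (h10 : γ₁ 0 = x) (h11 : γ₁ 1 = w)
    (h1len : eVariationOn γ₁ (Set.Icc 0 1) ≤ ENNReal.ofReal (dist x w + ε))
    (h2cont : ContinuousOn γ₂ (Set.Icc 0 1)) (h20 : γ₂ 0 = w) (h21 : γ₂ 1 = y)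
    (h2len : eVariationOn γ₂ (Set.Icc 0 1) ≤ ENNReal.ofReal (dist w y + ε)) :
    ∀ s ∈ Set.Icc (0 : ℝ) 1, ∀ u ∈ Set.Icc (0 : ℝ) 1,
      dist (γ₁ s) w + dist w (γ₂ u) - dist (γ₁ s) (γ₂ u) ≤ 2 * ε := by
  intro s hs u hu
  have h1 : dist x (γ₁ s) + dist (γ₁ s) w ≤ dist x w + ε :=
    two_dist_le x w γ₁ _ (by positivity) h10 h11 h1len hs
  have h2 : dist w (γ₂ u) + dist (γ₂ u) y ≤ dist w y + ε :=
    two_dist_le w y γ₂ _ (by positivity) h20 h21 h2len hu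
  have h3 : dist x y ≤ dist x (γ₁ s) + dist (γ₁ s) (γ₂ u) + dist (γ₂ u) y :=
    dist_triangle4 x (γ₁ s) (γ₂ u) y
  linarith
end

section
/- Let X be a bounded metric space and C_X = {X_i}_{i∈I} a covering of X by nonempty subsets such that δ_X := diam X − sup_i diam X_i > 0. Set ε = δ_X/5. Then every bounded metric space Y with d_GH(X,Y) < ε admits a covering C_Y = {Y_i}_{i∈I} by nonempty subsets, indexed by the same set I, with diam Y − sup_i diam Y_i > ε. -/
open Metric Set
open scoped ENNReal

/-!
Transport the covering along a correspondence `R` of distortion `r < 2δ/5`, taking `Y_i` to be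
the `R`-image of `X_i`. Distances change by at most `r` along `R`, so `diam Y_i ≤ diam X_i + r`
and `diam X ≤ diam Y + r`; hence `diam Y − sup diam Y_i ≥ δ − 2r > δ/5`.
-/

open Bornology SetRel

section Distortion

variable {X Y : Type*} [MetricSpace X] [MetricSpace Y]

lemma ofReal_abs_dist_sub_dist_le_corrDistortion {R : SetRel X Y} {p q : X × Y}
    (hp : p ∈ R) (hq : q ∈ R) :
    ENNReal.ofReal |dist p.1 q.1 - dist p.2 q.2| ≤ corrDistortion R :=
  le_iSup₂_of_le p hp (le_iSup₂_of_le q hq le_rfl)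

lemma abs_dist_sub_dist_le_toReal_corrDistortion {R : SetRel X Y} (hR : corrDistortion R ≠ ⊤)
    {p q : X × Y} (hp : p ∈ R) (hq : q ∈ R) :
    |dist p.1 q.1 - dist p.2 q.2| ≤ (corrDistortion R).toReal :=
  (ENNReal.ofReal_le_iff_le_toReal hR).1 (ofReal_abs_dist_sub_dist_le_corrDistortion hp hq)

lemma corrDistortion_inv_le (R : SetRel X Y) : corrDistortion R.inv ≤ corrDistortion R :=
  iSup₂_le fun p hp ↦ iSup₂_le fun q hq ↦ by
    rw [abs_sub_comm]
    exact ofReal_abs_dist_sub_dist_le_corrDistortion (R := R) hp hq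

lemma corrDistortion_inv (R : SetRel X Y) : corrDistortion R.inv = corrDistortion R :=
  le_antisymm (corrDistortion_inv_le R) (corrDistortion_inv_le R.inv)

lemma exists_isCorrespondence_corrDistortion_lt_of_ghDist_lt {ε : ℝ≥0∞} (h : ghDist X Y < ε) :
    ∃ R : SetRel X Y, IsCorrespondence R ∧ corrDistortion R < 2 * ε := by
  rw [ghDist, ENNReal.div_lt_iff (Or.inl two_ne_zero) (Or.inl ENNReal.ofNat_ne_top), mul_comm]
    at h
  obtain ⟨R, hR⟩ := iInf_lt_iff.1 h
  obtain ⟨hRcorr, hRlt⟩ := iInf_lt_iff.1 hR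
  exact ⟨R, hRcorr, hRlt⟩

lemma diam_image_le_diam_add_corrDistortion {R : SetRel X Y} (hR : corrDistortion R ≠ ⊤)
    {s : Set X} (hs : IsBounded s) :
    diam (R.image s) ≤ diam s + (corrDistortion R).toReal := by
  refine diam_le_of_forall_dist_le (by positivity) ?_
  rintro y ⟨x, hx, hxy⟩ y' ⟨x', hx', hxy'⟩
  have hdist := abs_le.1 (abs_dist_sub_dist_le_toReal_corrDistortion hR hxy hxy')
  linarith [dist_le_diam_of_mem hs hx hx', hdist.1]

lemma diam_univ_le_diam_univ_add_corrDistortion {R : SetRel X Y} (hR : IsCorrespondence R)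
    (hRtop : corrDistortion R ≠ ⊤) (hY : IsBounded (univ : Set Y)) :
    diam (univ : Set X) ≤ diam (univ : Set Y) + (corrDistortion R).toReal := by
  have himage : R.inv.image univ = univ := by
    rw [image_univ_right]
    exact eq_univ_of_forall hR.1
  rw [← corrDistortion_inv] at hRtop ⊢
  simpa only [himage] using diam_image_le_diam_add_corrDistortion hRtop hY

lemma iSup_diam_image_le_iSup_diam_add_corrDistortion {ι : Type*} {R : SetRel X Y}
    (hR : corrDistortion R ≠ ⊤) (hX : IsBounded (univ : Set X)) (C : ι → Set X) :
    ⨆ i, diam (R.image (C i)) ≤ (⨆ i, diam (C i)) + (corrDistortion R).toReal := by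
  have hbdd : BddAbove (range fun i ↦ diam (C i)) :=
    ⟨diam (univ : Set X), forall_mem_range.2 fun i ↦ diam_mono (subset_univ _) hX⟩
  refine Real.iSup_le (fun i ↦ ?_) (add_nonneg (Real.iSup_nonneg fun _ ↦ diam_nonneg)
    ENNReal.toReal_nonneg)
  exact (diam_image_le_diam_add_corrDistortion hR (hX.subset (subset_univ _))).trans
    (by gcongr; exact le_ciSup hbdd i)

end Distortion

theorem stmt6_general {X : Type*} [MetricSpace X]
    (hXb : EMetric.diam (Set.univ : Set X) ≠ ⊤)
    {I : Type*} (C : I → Set X)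
    (hCne : ∀ i, (C i).Nonempty) (hCcov : ⋃ i, C i = Set.univ)
    (δ : ℝ) (hδ : δ = Metric.diam (Set.univ : Set X) - ⨆ i, Metric.diam (C i))
    (Y : Type*) [MetricSpace Y]
    (hYb : EMetric.diam (Set.univ : Set Y) ≠ ⊤)
    (hd : ghDist X Y < ENNReal.ofReal (δ / 5)) :
    ∃ D : I → Set Y, (∀ i, (D i).Nonempty) ∧ (⋃ i, D i = Set.univ) ∧
      δ / 5 < Metric.diam (Set.univ : Set Y) - ⨆ i, Metric.diam (D i) := by
  obtain ⟨R, hR, hRlt⟩ := exists_isCorrespondence_corrDistortion_lt_of_ghDist_lt hd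
  rw [← ENNReal.ofReal_ofNat, ← ENNReal.ofReal_mul zero_le_two] at hRlt
  have hRtop : corrDistortion R ≠ ⊤ := hRlt.ne_top
  have hr : (corrDistortion R).toReal < 2 * (δ / 5) :=
    (ENNReal.lt_ofReal_iff_toReal_lt hRtop).1 hRlt
  have hX : IsBounded (univ : Set X) := isBounded_iff_ediam_ne_top.2 hXb
  have hY : IsBounded (univ : Set Y) := isBounded_iff_ediam_ne_top.2 hYb
  refine ⟨fun i ↦ R.image (C i), fun i ↦ ?_, ?_, ?_⟩
  · obtain ⟨x, hx⟩ := hCne i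
    obtain ⟨y, hxy⟩ := hR.1 x
    exact ⟨y, x, hx, hxy⟩
  · rw [← SetRel.image_iUnion, hCcov, image_univ_right]
    exact eq_univ_of_forall hR.2
  · linarith [diam_univ_le_diam_univ_add_corrDistortion hR hRtop hY,
      iSup_diam_image_le_iSup_diam_add_corrDistortion hRtop hX C]

/-- a covering witnessing `diam X − sup diam X_i = δ_X > 0` transfers to any
bounded `Y` with `d_GH(X,Y) < δ_X/5`, giving a covering with `diam Y − sup diam Y_i > δ_X/5`. -/
theorem stmt6 {X : Type*} [MetricSpace X] [Nonempty X]
    (hXb : EMetric.diam (Set.univ : Set X) ≠ ⊤)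
    {I : Type*} (C : I → Set X)
    (hCne : ∀ i, (C i).Nonempty) (hCcov : ⋃ i, C i = Set.univ)
    (δ : ℝ) (hδ : δ = Metric.diam (Set.univ : Set X) - ⨆ i, Metric.diam (C i))
    (hδpos : 0 < δ)
    (Y : Type*) [MetricSpace Y] [Nonempty Y]
    (hYb : EMetric.diam (Set.univ : Set Y) ≠ ⊤)
    (hd : ghDist X Y < ENNReal.ofReal (δ / 5)) :
    ∃ D : I → Set Y, (∀ i, (D i).Nonempty) ∧ (⋃ i, D i = Set.univ) ∧
      δ / 5 < Metric.diam (Set.univ : Set Y) - ⨆ i, Metric.diam (D i) :=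
  stmt6_general hXb C hCne hCcov δ hδ Y hYb hd
end

section
/- Let X and Y be bounded metric spaces such that: (1) d := diam Y − diam X > 0; (2) there is a partition D_X = {X_i}_{i∈I} of X into nonempty subsets with α(D_X) := inf{ d(X_i, X_j) : i ≠ j } > 0; (3) there is a covering C_Y = {Y_j}_{j∈J} of Y by nonempty subsets with δ_Y := diam Y − sup_j diam Y_j > 0; (4) the cardinality of J is at most the cardinality of I. Then diam Y − 2·d_GH(X,Y) ≥ min{d, α(D_X), δ_Y} > 0. -/
open Metric Set
open scoped ENNReal

/-!
Match the parts of the partition of `X` with the members of the covering of `Y` through a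
surjection `I → J` (which exists since `#J ≤ #I`), and relate each point of `D i` to each point
of `C (g i)`. For related pairs `(x, y)`, `(x', y')`, the excess `|xx'| - |yy'|` is at most
`diam X = diam Y - d`. The excess `|yy'| - |xx'|` is at most `diam Y - α` when `x, x'` lie in
different parts, and at most `diam C_j ≤ diam Y - δ` when they lie in the same part, since then
`y, y'` lie in the same member `C_j`.
-/

theorem isCorrespondence_iUnion_prod {X Y I J : Type*} {D : I → Set X} {C : J → Set Y}
    (hDne : ∀ i, (D i).Nonempty) (hDcov : ⋃ i, D i = univ)
    (hCne : ∀ j, (C j).Nonempty) (hCcov : ⋃ j, C j = univ)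
    {g : I → J} (hg : Function.Surjective g) :
    IsCorrespondence (⋃ i, D i ×ˢ C (g i)) := by
  constructor
  · intro x
    obtain ⟨i, hxi⟩ := mem_iUnion.mp (hDcov ▸ mem_univ x)
    obtain ⟨y, hy⟩ := hCne (g i)
    exact ⟨y, mem_iUnion.mpr ⟨i, hxi, hy⟩⟩
  · intro y
    obtain ⟨j, hyj⟩ := mem_iUnion.mp (hCcov ▸ mem_univ y)
    obtain ⟨i, rfl⟩ := hg j
    obtain ⟨x, hx⟩ := hDne i
    exact ⟨x, mem_iUnion.mpr ⟨i, hx, hyj⟩⟩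

variable {X Y : Type*} [MetricSpace X] [MetricSpace Y]

theorem two_mul_ghDist_le_ofReal {R : Set (X × Y)} (hR : IsCorrespondence R) {c : ℝ}
    (hc : ∀ p ∈ R, ∀ q ∈ R, |dist p.1 q.1 - dist p.2 q.2| ≤ c) :
    2 * ghDist X Y ≤ ENNReal.ofReal c :=
  calc 2 * ghDist X Y
      = ⨅ (R : Set (X × Y)) (_ : IsCorrespondence R), corrDistortion R := by
        rw [ghDist, ENNReal.mul_div_cancel' (by norm_num) (by norm_num)]
    _ ≤ corrDistortion R := iInf₂_le R hR
    _ ≤ ENNReal.ofReal c :=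
        iSup₂_le fun p hp => iSup₂_le fun q hq => ENNReal.ofReal_le_ofReal (hc p hp q hq)

theorem dist_sub_dist_le_of_mem_iUnion_prod {I : Type*} {D : I → Set X} {E : I → Set Y}
    (hY : Bornology.IsBounded (univ : Set Y)) {a b : ℝ}
    (hα : ∀ i j, i ≠ j → ∀ x ∈ D i, ∀ y ∈ D j, a ≤ dist x y)
    (hδ : ∀ i, diam (E i) ≤ diam (univ : Set Y) - b)
    {p q : X × Y} (hp : p ∈ ⋃ i, D i ×ˢ E i) (hq : q ∈ ⋃ i, D i ×ˢ E i) :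
    dist p.2 q.2 - dist p.1 q.1 ≤ diam (univ : Set Y) - min a b := by
  obtain ⟨i, hpD, hpE⟩ := mem_iUnion.mp hp
  obtain ⟨i', hqD, hqE⟩ := mem_iUnion.mp hq
  by_cases hii : i = i'
  · subst hii
    have hpq : dist p.2 q.2 ≤ diam (E i) :=
      dist_le_diam_of_mem (hY.subset (subset_univ _)) hpE hqE
    linarith [hδ i, min_le_right a b, dist_nonneg (x := p.1) (y := q.1)]
  · have hpq : dist p.2 q.2 ≤ diam (univ : Set Y) :=
      dist_le_diam_of_mem hY (mem_univ _) (mem_univ _)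
    linarith [hα i i' hii _ hpD _ hqD, min_le_left a b]

/-- `a` plays the role of `α(D_X)` and `b` that of `δ_Y`. -/
theorem stmt8_general {X Y : Type u} [MetricSpace X] [MetricSpace Y] [Nonempty Y]
    (hXb : EMetric.diam (Set.univ : Set X) ≠ ⊤)
    (hYb : EMetric.diam (Set.univ : Set Y) ≠ ⊤)
    (d : ℝ) (hd : d = Metric.diam (Set.univ : Set Y) - Metric.diam (Set.univ : Set X))
    (hdpos : 0 < d)
    {I J : Type u}
    (D : I → Set X) (hDne : ∀ i, (D i).Nonempty) (hDcov : ⋃ i, D i = Set.univ)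
    (a : ℝ) (ha : 0 < a)
    (hα : ∀ i j, i ≠ j → ∀ x ∈ D i, ∀ y ∈ D j, a ≤ dist x y)
    (C : J → Set Y) (hCne : ∀ j, (C j).Nonempty) (hCcov : ⋃ j, C j = Set.univ)
    (b : ℝ) (hb : 0 < b)
    (hδ : ∀ j, Metric.diam (C j) ≤ Metric.diam (Set.univ : Set Y) - b)
    (hcard : Cardinal.mk J ≤ Cardinal.mk I) :
    2 * ghDist X Y ≤
      ENNReal.ofReal (Metric.diam (Set.univ : Set Y) - min d (min a b)) ∧
    0 < min d (min a b) := by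
  refine ⟨?_, lt_min hdpos (lt_min ha hb)⟩
  have hX := isBounded_iff_ediam_ne_top.mpr hXb
  have hY := isBounded_iff_ediam_ne_top.mpr hYb
  obtain ⟨f⟩ : Nonempty (J ↪ I) := Cardinal.le_def J I |>.mp hcard
  obtain ⟨y⟩ := ‹Nonempty Y›
  obtain ⟨j, -⟩ := mem_iUnion.mp (hCcov ▸ mem_univ y)
  have : Nonempty J := ⟨j⟩
  have hg : Function.Surjective (Function.invFun f) := Function.invFun_surjective f.injective
  refine two_mul_ghDist_le_ofReal (isCorrespondence_iUnion_prod hDne hDcov hCne hCcov hg) ?_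
  intro p hp q hq
  have hXY : dist p.1 q.1 ≤ diam (univ : Set Y) - d := by
    rw [hd, sub_sub_cancel]
    exact dist_le_diam_of_mem hX (mem_univ _) (mem_univ _)
  have hYX := dist_sub_dist_le_of_mem_iUnion_prod hY hα (fun i => hδ _) hp hq
  rw [abs_sub_le_iff]
  constructor
  · linarith [dist_nonneg (x := p.2) (y := q.2), min_le_left d (min a b)]
  · linarith [min_le_right d (min a b)]

/-- the key distance estimate. Here `a` plays the role of `α(D_X) > 0`
(a positive lower bound on distances between distinct parts of the partition `D`),
`b` that of `δ_Y > 0` (so `diam C_j ≤ diam Y − b` for all `j`).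
Conclusion: `diam Y − 2·d_GH(X,Y) ≥ min {d, a, b} > 0`. -/
theorem stmt8 {X Y : Type u} [MetricSpace X] [MetricSpace Y] [Nonempty X] [Nonempty Y]
    (hXb : EMetric.diam (Set.univ : Set X) ≠ ⊤)
    (hYb : EMetric.diam (Set.univ : Set Y) ≠ ⊤)
    (d : ℝ) (hd : d = Metric.diam (Set.univ : Set Y) - Metric.diam (Set.univ : Set X))
    (hdpos : 0 < d)
    {I J : Type u}
    (D : I → Set X) (hDne : ∀ i, (D i).Nonempty) (hDcov : ⋃ i, D i = Set.univ)
    (hDdisj : Pairwise (Function.onFun Disjoint D))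
    (a : ℝ) (ha : 0 < a)
    (hα : ∀ i j, i ≠ j → ∀ x ∈ D i, ∀ y ∈ D j, a ≤ dist x y)
    (C : J → Set Y) (hCne : ∀ j, (C j).Nonempty) (hCcov : ⋃ j, C j = Set.univ)
    (b : ℝ) (hb : 0 < b)
    (hδ : ∀ j, Metric.diam (C j) ≤ Metric.diam (Set.univ : Set Y) - b)
    (hcard : Cardinal.mk J ≤ Cardinal.mk I) :
    2 * ghDist X Y ≤
      ENNReal.ofReal (Metric.diam (Set.univ : Set Y) - min d (min a b)) ∧
    0 < min d (min a b) :=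
  stmt8_general hXb hYb d hd hdpos D hDne hDcov a ha hα C hCne hCcov b hb hδ hcard
end

section
/- Let Y and Z be bounded metric spaces with Z subextreme with respect to Y, i.e. d_GH(Y,Z) > 0 and 2·d_GH(Y,Z) = diam Z − diam Y. Fix ε ∈ (0, diam Z − diam Y) and let R be a correspondence between Y and Z with dis R ≤ 2·d_GH(Y,Z) + 2ε. Then for every t ∈ [0,1], the space R_t (the set R with the metric |(y,z),(y',z')|_t = (1−t)·d(y,y') + t·d(z,z'), with R_0 = Y, R_1 = Z) satisfies diam R_t ≥ (1−t)·diam Y + t·diam Z − 4ε. -/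
open Metric Set
open scoped ENNReal

open Bornology

/-!
Choose `z, z' ∈ Z` with `d(z, z')` close to `diam Z` and lift them through `R` to
`(y, z), (y', z') ∈ R`. Since `dis R ≤ diam Z − diam Y + 2ε`, the distortion bound gives
`d(y, y') ≥ d(z, z') − (diam Z − diam Y) − 2ε`, so the distance of the two lifts in `R_t` is at
least `d(z, z') − (1 − t)(diam Z − diam Y + 2ε)`. Taking the supremum over `z, z'` yields
`diam R_t ≥ (1 − t) diam Y + t diam Z − 2(1 − t)ε`.
-/

section Interpolation

variable {Y Z : Type*}

/-- The space `R_t`. -/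
noncomputable abbrev interpPseudoMetricSpace [PseudoMetricSpace Y] [PseudoMetricSpace Z]
    (R : Set (Y × Z)) (t : ℝ) (ht : t ∈ Icc (0 : ℝ) 1) : PseudoMetricSpace R where
  dist p q := (1 - t) * dist p.1.1 q.1.1 + t * dist p.1.2 q.1.2
  dist_self p := by simp
  dist_comm p q := by
    show _ = (1 - t) * dist q.1.1 p.1.1 + t * dist q.1.2 p.1.2
    rw [dist_comm q.1.1, dist_comm q.1.2]
  dist_triangle p q r :=
    calc (1 - t) * dist p.1.1 r.1.1 + t * dist p.1.2 r.1.2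
        ≤ (1 - t) * (dist p.1.1 q.1.1 + dist q.1.1 r.1.1)
          + t * (dist p.1.2 q.1.2 + dist q.1.2 r.1.2) :=
          add_le_add (mul_le_mul_of_nonneg_left (dist_triangle _ _ _) (sub_nonneg.2 ht.2))
            (mul_le_mul_of_nonneg_left (dist_triangle _ _ _) ht.1)
      _ = ((1 - t) * dist p.1.1 q.1.1 + t * dist p.1.2 q.1.2)
          + ((1 - t) * dist q.1.1 r.1.1 + t * dist q.1.2 r.1.2) := by ring

theorem isBounded_univ_interp [PseudoMetricSpace Y] [PseudoMetricSpace Z]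
    (R : Set (Y × Z)) (t : ℝ) (ht : t ∈ Icc (0 : ℝ) 1)
    (hY : IsBounded (univ : Set Y)) (hZ : IsBounded (univ : Set Z)) :
    @IsBounded R (interpPseudoMetricSpace R t ht).toBornology univ := by
  let := interpPseudoMetricSpace R t ht
  refine isBounded_iff.2
    ⟨(1 - t) * diam (univ : Set Y) + t * diam (univ : Set Z), fun p _ q _ => ?_⟩
  exact add_le_add
    (mul_le_mul_of_nonneg_left (dist_le_diam_of_mem hY trivial trivial) (sub_nonneg.2 ht.2))
    (mul_le_mul_of_nonneg_left (dist_le_diam_of_mem hZ trivial trivial) ht.1)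

theorem abs_dist_sub_dist_le_of_corrDistortion_le [MetricSpace Y] [MetricSpace Z]
    {R : Set (Y × Z)} {c : ℝ} (hc : 0 ≤ c) (hdis : corrDistortion R ≤ ENNReal.ofReal c)
    {p q : Y × Z} (hp : p ∈ R) (hq : q ∈ R) : |dist p.1 q.1 - dist p.2 q.2| ≤ c := by
  rw [← ENNReal.ofReal_le_ofReal_iff hc]
  exact (le_iSup₂_of_le p hp (le_iSup₂_of_le
    (f := fun q _ => ENNReal.ofReal |dist p.1 q.1 - dist p.2 q.2|) q hq le_rfl)).trans hdis

theorem diam_sub_le_diam_interp [MetricSpace Y] [MetricSpace Z] {R : Set (Y × Z)}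
    (hRZ : ∀ z : Z, ∃ y : Y, (y, z) ∈ R) {c : ℝ} (hc : 0 ≤ c)
    (hdis : corrDistortion R ≤ ENNReal.ofReal c)
    (hY : IsBounded (univ : Set Y)) (hZ : IsBounded (univ : Set Z))
    (t : ℝ) (ht : t ∈ Icc (0 : ℝ) 1) :
    diam (univ : Set Z) - (1 - t) * c ≤ @diam R (interpPseudoMetricSpace R t ht) univ := by
  let := interpPseudoMetricSpace R t ht
  have hdiam_nonneg : 0 ≤ diam (univ : Set R) := diam_nonneg
  have hc_weighted : 0 ≤ (1 - t) * c := mul_nonneg (sub_nonneg.2 ht.2) hc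
  rw [sub_le_iff_le_add]
  refine diam_le_of_forall_dist_le (by linarith) fun z _ z' _ => ?_
  obtain ⟨y, hy⟩ := hRZ z
  obtain ⟨y', hy'⟩ := hRZ z'
  have hzy : dist z z' ≤ dist y y' + c := by
    linarith [(abs_le.1 (abs_dist_sub_dist_le_of_corrDistortion_le hc hdis hy hy')).1]
  have hlift : (1 - t) * dist y y' + t * dist z z' ≤ diam (univ : Set R) :=
    dist_le_diam_of_mem (x := ⟨(y, z), hy⟩) (y := ⟨(y', z'), hy'⟩)
      (isBounded_univ_interp R t ht hY hZ) trivial trivial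
  linarith [mul_le_mul_of_nonneg_left hzy (sub_nonneg.2 ht.2)]

end Interpolation

theorem stmt10_general {Y Z : Type*} [MetricSpace Y] [MetricSpace Z]
    (hYb : EMetric.diam (Set.univ : Set Y) ≠ ⊤)
    (hZb : EMetric.diam (Set.univ : Set Z) ≠ ⊤)
    (hsub : 2 * ghDist Y Z =
      ENNReal.ofReal (Metric.diam (Set.univ : Set Z) - Metric.diam (Set.univ : Set Y)))
    (ε : ℝ) (hε0 : 0 < ε)
    (hεlt : ε < Metric.diam (Set.univ : Set Z) - Metric.diam (Set.univ : Set Y))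
    (R : Set (Y × Z)) (hR : IsCorrespondence R)
    (hdis : corrDistortion R ≤ 2 * ghDist Y Z + ENNReal.ofReal (2 * ε)) :
    ∃ M : ∀ t : ℝ, t ∈ Set.Icc (0 : ℝ) 1 → PseudoMetricSpace ↥R,
      (∀ t ht, ∀ p q : ↥R, @dist ↥R (M t ht).toDist p q
          = (1 - t) * dist p.val.1 q.val.1 + t * dist p.val.2 q.val.2) ∧
      (∀ t ht, (1 - t) * Metric.diam (Set.univ : Set Y)
            + t * Metric.diam (Set.univ : Set Z) - 4 * ε
          ≤ @Metric.diam ↥R (M t ht) Set.univ) := by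
  set dY := diam (univ : Set Y)
  set dZ := diam (univ : Set Z)
  have hc : 0 ≤ dZ - dY + 2 * ε := by linarith
  have hdis' : corrDistortion R ≤ ENNReal.ofReal (dZ - dY + 2 * ε) := by
    rwa [ENNReal.ofReal_add (by linarith) (by linarith), ← hsub]
  refine ⟨interpPseudoMetricSpace R, fun _ _ _ _ => rfl, fun t ht => ?_⟩
  have := diam_sub_le_diam_interp hR.2 hc hdis' (isBounded_iff_ediam_ne_top.2 hYb)
    (isBounded_iff_ediam_ne_top.2 hZb) t ht
  linarith [mul_nonneg ht.1 hε0.le]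

/-- if `Z` is subextreme with respect to `Y` and `R` is a correspondence
with `dis R ≤ 2·d_GH(Y,Z) + 2ε`, where `0 < ε < diam Z − diam Y`, then the interpolated
(pseudo)metric spaces `R_t`, `t ∈ [0,1]`, satisfy
`diam R_t ≥ (1−t)·diam Y + t·diam Z − 4ε`. -/
theorem stmt10 {Y Z : Type*} [MetricSpace Y] [MetricSpace Z] [Nonempty Y] [Nonempty Z]
    (hYb : EMetric.diam (Set.univ : Set Y) ≠ ⊤)
    (hZb : EMetric.diam (Set.univ : Set Z) ≠ ⊤)
    (hpos : 0 < ghDist Y Z)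
    (hsub : 2 * ghDist Y Z =
      ENNReal.ofReal (Metric.diam (Set.univ : Set Z) - Metric.diam (Set.univ : Set Y)))
    (ε : ℝ) (hε0 : 0 < ε)
    (hεlt : ε < Metric.diam (Set.univ : Set Z) - Metric.diam (Set.univ : Set Y))
    (R : Set (Y × Z)) (hR : IsCorrespondence R)
    (hdis : corrDistortion R ≤ 2 * ghDist Y Z + ENNReal.ofReal (2 * ε)) :
    ∃ M : ∀ t : ℝ, t ∈ Set.Icc (0 : ℝ) 1 → PseudoMetricSpace ↥R,
      (∀ t ht, ∀ p q : ↥R, @dist ↥R (M t ht).toDist p q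
          = (1 - t) * dist p.val.1 q.val.1 + t * dist p.val.2 q.val.2) ∧
      (∀ t ht, (1 - t) * Metric.diam (Set.univ : Set Y)
            + t * Metric.diam (Set.univ : Set Z) - 4 * ε
          ≤ @Metric.diam ↥R (M t ht) Set.univ) :=
  stmt10_general hYb hZb hsub ε hε0 hεlt R hR hdis
end

section
/- Let X and Y be bounded metric spaces and m, n cardinals with 1 < n ≤ #X and 1 < m ≤ #Y. Suppose the metric segment [X,Y] is extreme (2·d_GH(X,Y) = diam X = diam Y > 0) and: (1) there is a partition of X into n nonempty subsets D_X with α(D_X) > 0; (2) there is a covering of Y by m nonempty subsets C_Y with sup of their diameters < diam Y; (3) m ≤ n. Then the segment [X,Y] cannot be extended beyond Y: there is no metric space Z with d_GH(Y,Z) > 0 and d_GH(X,Y) + d_GH(Y,Z) = d_GH(X,Z) < ∞. -/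
open Metric Set
open scoped ENNReal

/-!
Put `Δ = diam X = diam Y` and `t = 2 d_GH(Y, Z) ∈ (0, ∞)`, so that the hypotheses force
`2 d_GH(X, Z) = Δ + t`. Fix a surjection `g : I → J` and a correspondence `Q` between `Y` and `Z`
of distortion below `t + δ`, where `δ = min a b / 2`. Relating every point of the block `D i`
to every point of `Z` that `Q` relates to the piece `C (g i)` gives a correspondence between
`X` and `Z`. Two of its pairs in the same block have `d(z, z') < diam C + t + δ ≤ Δ - b + t + δ`,
two in different blocks have `d(x, x') ≥ a`; either way its distortion is at most
`max Δ (Δ + t - δ) < Δ + t`, a contradiction.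
-/

section GromovHausdorff

variable {X Y : Type*} [MetricSpace X] [MetricSpace Y]

lemma ofReal_abs_dist_sub_le_corrDistortion {R : Set (X × Y)} {p q : X × Y} (hp : p ∈ R)
    (hq : q ∈ R) : ENNReal.ofReal |dist p.1 q.1 - dist p.2 q.2| ≤ corrDistortion R :=
  le_iSup₂_of_le p hp (le_iSup₂_of_le q hq le_rfl)

lemma corrDistortion_le_ofReal {R : Set (X × Y)} {r : ℝ}
    (h : ∀ p ∈ R, ∀ q ∈ R, |dist p.1 q.1 - dist p.2 q.2| ≤ r) :
    corrDistortion R ≤ ENNReal.ofReal r :=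
  iSup₂_le fun p hp ↦ iSup₂_le fun q hq ↦ ENNReal.ofReal_le_ofReal (h p hp q hq)

lemma two_mul_ghDist :
    2 * ghDist X Y = ⨅ (R : Set (X × Y)) (_ : IsCorrespondence R), corrDistortion R :=
  ENNReal.mul_div_cancel two_ne_zero ENNReal.ofNat_ne_top

lemma two_mul_ghDist_le {R : Set (X × Y)} (hR : IsCorrespondence R) :
    2 * ghDist X Y ≤ corrDistortion R :=
  two_mul_ghDist.trans_le (iInf₂_le R hR)

lemma exists_isCorrespondence_abs_dist_sub_lt {r : ℝ} (h : 2 * ghDist X Y < ENNReal.ofReal r) :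
    ∃ R : Set (X × Y), IsCorrespondence R ∧
      ∀ p ∈ R, ∀ q ∈ R, |dist p.1 q.1 - dist p.2 q.2| < r := by
  rw [two_mul_ghDist] at h
  obtain ⟨R, hR⟩ := iInf_lt_iff.mp h
  obtain ⟨hRc, hRlt⟩ := iInf_lt_iff.mp hR
  refine ⟨R, hRc, fun p hp q hq ↦ ?_⟩
  have hr : 0 < r := ENNReal.ofReal_pos.mp (pos_of_gt hRlt)
  exact (ENNReal.ofReal_lt_ofReal_iff hr).mp
    ((ofReal_abs_dist_sub_le_corrDistortion hp hq).trans_lt hRlt)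

end GromovHausdorff

section BlockCorrespondence

variable {X Y Z I J : Type*} (D : I → Set X) (C : J → Set Y) (g : I → J) (Q : Set (Y × Z))

def blockCorrespondence : Set (X × Z) :=
  {p | ∃ i, p.1 ∈ D i ∧ ∃ y ∈ C (g i), (y, p.2) ∈ Q}

variable {D C g Q}

lemma isCorrespondence_blockCorrespondence (hDne : ∀ i, (D i).Nonempty)
    (hDcov : ⋃ i, D i = univ) (hCne : ∀ j, (C j).Nonempty) (hCcov : ⋃ j, C j = univ)
    (hg : Function.Surjective g) (hQ : IsCorrespondence Q) :
    IsCorrespondence (blockCorrespondence D C g Q) := by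
  constructor
  · intro x
    obtain ⟨i, hxi⟩ := mem_iUnion.mp (hDcov.symm ▸ mem_univ x)
    obtain ⟨y, hy⟩ := hCne (g i)
    obtain ⟨z, hyz⟩ := hQ.1 y
    exact ⟨z, i, hxi, y, hy, hyz⟩
  · intro z
    obtain ⟨y, hyz⟩ := hQ.2 z
    obtain ⟨j, hyj⟩ := mem_iUnion.mp (hCcov.symm ▸ mem_univ y)
    obtain ⟨i, rfl⟩ := hg j
    obtain ⟨x, hxi⟩ := hDne i
    exact ⟨x, i, hxi, y, hyj, hyz⟩

variable [MetricSpace X] [MetricSpace Y] [MetricSpace Z]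

lemma corrDistortion_blockCorrespondence_le (hX : Bornology.IsBounded (univ : Set X))
    (hY : Bornology.IsBounded (univ : Set Y)) {a b s : ℝ}
    (hD : ∀ i j, i ≠ j → ∀ x ∈ D i, ∀ x' ∈ D j, a ≤ dist x x')
    (hC : ∀ j, diam (C j) ≤ diam (univ : Set Y) - b)
    (hQ : ∀ p ∈ Q, ∀ q ∈ Q, |dist p.1 q.1 - dist p.2 q.2| ≤ s) :
    corrDistortion (blockCorrespondence D C g Q)
      ≤ ENNReal.ofReal (max (diam (univ : Set X)) (diam (univ : Set Y) + s - min a b)) := by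
  refine corrDistortion_le_ofReal ?_
  rintro ⟨x, z⟩ ⟨i, hx, y, hy, hyz⟩ ⟨x', z'⟩ ⟨i', hx', y', hy', hyz'⟩
  have hxx' : dist x x' ≤ diam (univ : Set X) := dist_le_diam_of_mem hX trivial trivial
  have hzz' : dist z z' ≤ dist y y' + s := by
    linarith [(abs_le.mp (hQ _ hyz _ hyz')).1]
  have hgap : dist z z' - dist x x' ≤ diam (univ : Set Y) + s - min a b := by
    rcases eq_or_ne i i' with rfl | hii'
    · have hyy' : dist y y' ≤ diam (C (g i)) :=
        dist_le_diam_of_mem (hY.subset (subset_univ _)) hy hy'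
      linarith [hC (g i), min_le_right a b, dist_nonneg (x := x) (y := x')]
    · have hyy' : dist y y' ≤ diam (univ : Set Y) := dist_le_diam_of_mem hY trivial trivial
      linarith [hD i i' hii' x hx x' hx', min_le_left a b]
  rw [abs_le]
  constructor
  · linarith [le_max_right (diam (univ : Set X)) (diam (univ : Set Y) + s - min a b)]
  · linarith [le_max_left (diam (univ : Set X)) (diam (univ : Set Y) + s - min a b),
      dist_nonneg (x := z) (y := z')]

end BlockCorrespondence

theorem stmt11_general {X Y I J : Type u} [MetricSpace X] [MetricSpace Y]
    (hXb : EMetric.diam (Set.univ : Set X) ≠ ⊤)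
    (hYb : EMetric.diam (Set.univ : Set Y) ≠ ⊤)
    (hext : 2 * ghDist X Y = ENNReal.ofReal (Metric.diam (Set.univ : Set X)))
    (hdiam : Metric.diam (Set.univ : Set X) = Metric.diam (Set.univ : Set Y))
    (hJ1 : 1 < Cardinal.mk J)
    (hJI : Cardinal.mk J ≤ Cardinal.mk I)
    (D : I → Set X) (hDne : ∀ i, (D i).Nonempty) (hDcov : ⋃ i, D i = Set.univ)
    (a : ℝ) (ha : 0 < a)
    (hα : ∀ i j, i ≠ j → ∀ x ∈ D i, ∀ y ∈ D j, a ≤ dist x y)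
    (C : J → Set Y) (hCne : ∀ j, (C j).Nonempty) (hCcov : ⋃ j, C j = Set.univ)
    (b : ℝ) (hb : 0 < b)
    (hCd : ∀ j, Metric.diam (C j) ≤ Metric.diam (Set.univ : Set Y) - b) :
    ∀ (Z : Type v) [MetricSpace Z] [Nonempty Z],
      ¬ (0 < ghDist Y Z ∧ ghDist X Y + ghDist Y Z = ghDist X Z ∧ ghDist X Z ≠ ⊤) := by
  rintro Z _ _ ⟨hYZ, htri, hXZ⟩
  set Δ := diam (univ : Set X)
  have hYZ_ne_top : 2 * ghDist Y Z ≠ ⊤ :=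
    ENNReal.mul_ne_top ENNReal.ofNat_ne_top (ENNReal.add_ne_top.mp (htri ▸ hXZ)).2
  set t := (2 * ghDist Y Z).toReal
  have ht : 0 < t := ENNReal.toReal_pos (by positivity) hYZ_ne_top
  have hYZ_eq : 2 * ghDist Y Z = ENNReal.ofReal t := (ENNReal.ofReal_toReal hYZ_ne_top).symm
  have hXZ_eq : 2 * ghDist X Z = ENNReal.ofReal (Δ + t) := by
    rw [← htri, mul_add, hext, hYZ_eq, ENNReal.ofReal_add diam_nonneg ht.le]
  have : Nonempty J := (Cardinal.one_lt_iff_nontrivial.mp hJ1).to_nonempty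
  obtain ⟨f⟩ := hJI
  set δ := min a b / 2
  have hδ : 0 < δ := by positivity
  obtain ⟨Q, hQ, hQt⟩ := exists_isCorrespondence_abs_dist_sub_lt (X := Y) (Y := Z) (r := t + δ)
    (hYZ_eq ▸ (ENNReal.ofReal_lt_ofReal_iff (by linarith)).mpr (by linarith))
  have hS := (two_mul_ghDist_le (isCorrespondence_blockCorrespondence hDne hDcov hCne hCcov
      (Function.invFun_surjective f.injective) hQ)).trans
    (corrDistortion_blockCorrespondence_le (Metric.isBounded_iff_ediam_ne_top.mpr hXb)
      (Metric.isBounded_iff_ediam_ne_top.mpr hYb) hα hCd fun p hp q hq ↦ (hQt p hp q hq).le)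
  rw [hXZ_eq, ENNReal.ofReal_le_ofReal_iff (le_max_of_le_left diam_nonneg), ← hdiam] at hS
  have hδ2 : min a b = 2 * δ := by ring
  rcases le_max_iff.mp hS with h | h <;> linarith

/-- non-extendability of extreme metric segments. The index types `I`, `J`
play the roles of the cardinals `n`, `m`; `a > 0` is a lower bound witnessing
`α(D_X) > 0`, and `b > 0` witnesses `sup_j diam C_j < diam Y`. Conclusion: the segment
`[X, Y]` cannot be extended beyond `Y`. -/
theorem stmt11 {X Y I J : Type u} [MetricSpace X] [MetricSpace Y] [Nonempty X] [Nonempty Y]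
    (hXb : EMetric.diam (Set.univ : Set X) ≠ ⊤)
    (hYb : EMetric.diam (Set.univ : Set Y) ≠ ⊤)
    (hext : 2 * ghDist X Y = ENNReal.ofReal (Metric.diam (Set.univ : Set X)))
    (hdiam : Metric.diam (Set.univ : Set X) = Metric.diam (Set.univ : Set Y))
    (hpos : 0 < Metric.diam (Set.univ : Set X))
    (hI1 : 1 < Cardinal.mk I) (hIX : Cardinal.mk I ≤ Cardinal.mk X)
    (hJ1 : 1 < Cardinal.mk J) (hJY : Cardinal.mk J ≤ Cardinal.mk Y)
    (hJI : Cardinal.mk J ≤ Cardinal.mk I)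
    (D : I → Set X) (hDne : ∀ i, (D i).Nonempty) (hDcov : ⋃ i, D i = Set.univ)
    (hDdisj : Pairwise (Function.onFun Disjoint D))
    (a : ℝ) (ha : 0 < a)
    (hα : ∀ i j, i ≠ j → ∀ x ∈ D i, ∀ y ∈ D j, a ≤ dist x y)
    (C : J → Set Y) (hCne : ∀ j, (C j).Nonempty) (hCcov : ⋃ j, C j = Set.univ)
    (b : ℝ) (hb : 0 < b)
    (hCd : ∀ j, Metric.diam (C j) ≤ Metric.diam (Set.univ : Set Y) - b) :
    ∀ (Z : Type v) [MetricSpace Z] [Nonempty Z],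
      ¬ (0 < ghDist Y Z ∧ ghDist X Y + ghDist Y Z = ghDist X Z ∧ ghDist X Z ≠ ⊤) :=
  stmt11_general hXb hYb hext hdiam hJ1 hJI D hDne hDcov a ha hα C hCne hCcov b hb hCd
end

section
/- Let X and Y be nonempty compact metric spaces with 2·ghDist(X,Y) = diam X = diam Y > 0 (mutual hyperextremality), and suppose there are cardinals 1 < n ≤ #X, 1 < m ≤ #Y with m ≤ n, a partition of X into n nonempty subsets D_X with α(D_X) > 0, and a covering of Y by m nonempty subsets whose diameters are all bounded by some c < diam Y. Then there is no nonempty compact metric space Z with ghDist(Y,Z) > 0 and ghDist(X,Z) = ghDist(X,Y) + ghDist(Y,Z); equivalently, since the Gromov–Hausdorff space of compact metric spaces is geodesic, no shortest curve joining X and Y can be extended beyond Y. -/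
open Metric Set

universe u

/-!
Let `r = ghDist Y Z > 0`. Send every `z ∈ Z` to a point `g z ∈ Y` at distance at most `r` in an
optimal coupling, and label `z` by a piece of the covering of `Y` that contains `g z`. There are at
least as many pieces of `X` as labels, so the pieces of `X` can be mapped onto the labels in use;
relating `x` to `z` when the piece of `x` is mapped to the label of `z` is a correspondence. Points
of `Z` with equal labels are at most `c + 2r` apart, and points with different labels are related
to points of distinct pieces of `X`, which are at least `a` apart. Hence the distortion is below
`diam X + 2r`, and `ghDist X Z < diam X / 2 + r = ghDist X Y + ghDist Y Z`.
-/

theorem exists_correspondence_of_mk_le {X Z : Type*} {I J : Type u} [Nonempty Z]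
    (D : I → Set X) (hDne : ∀ i, (D i).Nonempty) (hDcov : ⋃ i, D i = univ) (q : Z → J)
    (hJI : Cardinal.mk J ≤ Cardinal.mk I) :
    ∃ R : X → Z → Prop, (∀ x, ∃ z, R x z) ∧ (∀ z, ∃ x, R x z) ∧
      ∀ ⦃x x' z z'⦄, R x z → R x' z' → q z ≠ q z' →
        ∃ i j, i ≠ j ∧ x ∈ D i ∧ x' ∈ D j := by
  obtain ⟨z₀⟩ := ‹Nonempty Z›
  obtain ⟨σ, hσ⟩ : ∃ σ : I → range q, σ.Surjective :=
    Function.exists_surjective_iff.2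
      ⟨⟨fun _ => ⟨q z₀, mem_range_self z₀⟩⟩,
        Cardinal.le_def _ _ |>.1 ((Cardinal.mk_set_le _).trans hJI)⟩
  refine ⟨fun x z => ∃ i, x ∈ D i ∧ (σ i : J) = q z, fun x => ?_, fun z => ?_, ?_⟩
  · obtain ⟨i, hi⟩ := mem_iUnion.1 (hDcov ▸ mem_univ x)
    obtain ⟨z, hz⟩ := (σ i).2
    exact ⟨z, i, hi, hz.symm⟩
  · obtain ⟨i, hi⟩ := hσ ⟨q z, mem_range_self z⟩
    obtain ⟨x, hx⟩ := hDne i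
    exact ⟨x, i, hx, by rw [hi]⟩
  · rintro x x' z z' ⟨i, hx, hσi⟩ ⟨j, hx', hσj⟩ hne
    exact ⟨i, j, fun h => hne (by rw [← hσi, ← hσj, h]), hx, hx'⟩

namespace GromovHausdorff

theorem ghDist_le_of_correspondence {X : Type*} [MetricSpace X] [CompactSpace X] [Nonempty X]
    {Z : Type*} [MetricSpace Z] [CompactSpace Z] [Nonempty Z] (R : X → Z → Prop)
    (hX : ∀ x, ∃ z, R x z) (hZ : ∀ z, ∃ x, R x z) {d : ℝ}
    (hdis : ∀ ⦃x x' z z'⦄, R x z → R x' z' → |dist x x' - dist z z'| ≤ d) :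
    ghDist X Z ≤ d / 2 := by
  let K := {w : X × Z // R w.1 w.2}
  obtain ⟨x₀⟩ := ‹Nonempty X›
  obtain ⟨z₀, h₀⟩ := hX x₀
  have : Nonempty K := ⟨⟨(x₀, z₀), h₀⟩⟩
  have hd : 0 ≤ d := (abs_nonneg _).trans (hdis h₀ h₀)
  refine le_of_forall_pos_le_add fun ε hε => ?_
  have hρ : 0 < (d + 2 * ε) / 2 := by positivity
  let : MetricSpace (X ⊕ Z) := glueMetricApprox (fun w : K => w.1.1) (fun w : K => w.1.2)
    ((d + 2 * ε) / 2) hρ fun w w' => by linarith [hdis w.2 w'.2]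
  have glued (w : K) : dist (Sum.inl w.1.1 : X ⊕ Z) (Sum.inr w.1.2) = (d + 2 * ε) / 2 :=
    glueDist_glued_points _ _ _ w
  calc ghDist X Z ≤ hausdorffDist (range (@Sum.inl X Z)) (range Sum.inr) :=
        ghDist_le_hausdorffDist (Isometry.of_dist_eq fun _ _ => rfl)
          (Isometry.of_dist_eq fun _ _ => rfl)
    _ ≤ (d + 2 * ε) / 2 := by
        refine hausdorffDist_le_of_mem_dist hρ.le ?_ ?_
        · rintro _ ⟨x, rfl⟩
          obtain ⟨z, hxz⟩ := hX x
          exact ⟨_, mem_range_self z, (glued ⟨(x, z), hxz⟩).le⟩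
        · rintro _ ⟨z, rfl⟩
          obtain ⟨x, hxz⟩ := hZ z
          exact ⟨_, mem_range_self x, by rw [dist_comm]; exact (glued ⟨(x, z), hxz⟩).le⟩
    _ = d / 2 + ε := by ring

theorem exists_dist_le_dist_add_two_mul_ghDist (Y : Type*) [MetricSpace Y] [CompactSpace Y]
    [Nonempty Y] (Z : Type*) [MetricSpace Z] [CompactSpace Z] [Nonempty Z] :
    ∃ g : Z → Y, ∀ z z', dist z z' ≤ dist (g z) (g z') + 2 * ghDist Y Z := by
  obtain ⟨Φ, Ψ, hΦ, hΨ, hYZ⟩ := ghDist_eq_hausdorffDist Y Z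
  rw [hausdorffDist_comm] at hYZ
  have hfin : hausdorffEDist (range Ψ) (range Φ) ≠ ⊤ :=
    hausdorffEDist_ne_top_of_nonempty_of_bounded (range_nonempty _) (range_nonempty _)
      (isCompact_range hΨ.continuous).isBounded (isCompact_range hΦ.continuous).isBounded
  have near (z : Z) : ∃ y, dist (Ψ z) (Φ y) ≤ ghDist Y Z := by
    obtain ⟨_, ⟨y, rfl⟩, hy⟩ :=
      (isCompact_range hΦ.continuous).exists_infDist_eq_dist (range_nonempty _) (Ψ z)
    exact ⟨y, hy ▸ hYZ ▸ infDist_le_hausdorffDist_of_mem (mem_range_self z) hfin⟩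
  choose g hg using near
  refine ⟨g, fun z z' => ?_⟩
  calc dist z z' = dist (Ψ z) (Ψ z') := (hΨ.dist_eq z z').symm
    _ ≤ dist (Ψ z) (Φ (g z)) + dist (Φ (g z)) (Φ (g z')) + dist (Φ (g z')) (Ψ z') :=
        dist_triangle4 _ _ _ _
    _ ≤ dist (g z) (g z') + 2 * ghDist Y Z := by
        rw [hΦ.dist_eq, dist_comm (Φ _)]
        linarith [hg z, hg z']

theorem two_mul_ghDist_le_of_partition_of_cover {X Y Z : Type*} {I J : Type u}
    [MetricSpace X] [CompactSpace X] [Nonempty X] [MetricSpace Y] [CompactSpace Y] [Nonempty Y]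
    [MetricSpace Z] [CompactSpace Z] [Nonempty Z]
    (D : I → Set X) (hDne : ∀ i, (D i).Nonempty) (hDcov : ⋃ i, D i = univ) {a : ℝ}
    (hα : ∀ i j, i ≠ j → ∀ x ∈ D i, ∀ y ∈ D j, a ≤ dist x y)
    (C : J → Set Y) (hCcov : ⋃ j, C j = univ) {c : ℝ} (hCd : ∀ j, diam (C j) ≤ c)
    (hJI : Cardinal.mk J ≤ Cardinal.mk I) :
    2 * ghDist X Z ≤ max (diam (univ : Set X))
      (max (c + 2 * ghDist Y Z) (diam (univ : Set Y) + 2 * ghDist Y Z - a)) := by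
  obtain ⟨g, hg⟩ := exists_dist_le_dist_add_two_mul_ghDist Y Z
  choose q hq using fun z => mem_iUnion.1 (hCcov ▸ mem_univ (g z))
  obtain ⟨R, hX, hZ, hsep⟩ := exists_correspondence_of_mk_le D hDne hDcov q hJI
  set M := max (diam (univ : Set X))
    (max (c + 2 * ghDist Y Z) (diam (univ : Set Y) + 2 * ghDist Y Z - a))
  suffices ∀ ⦃x x' z z'⦄, R x z → R x' z' → |dist x x' - dist z z'| ≤ M by
    linarith [ghDist_le_of_correspondence R hX hZ this]
  intro x x' z z' hxz hxz'
  have hx : dist x x' ≤ diam (univ : Set X) :=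
    dist_le_diam_of_mem isBounded_of_compactSpace (mem_univ _) (mem_univ _)
  have hz := hg z z'
  have hgz : dist (g z) (g z') ≤ diam (univ : Set Y) :=
    dist_le_diam_of_mem isBounded_of_compactSpace (mem_univ _) (mem_univ _)
  have hM₁ : diam (univ : Set X) ≤ M := le_max_left _ _
  have hM₂ : c + 2 * ghDist Y Z ≤ M := (le_max_left _ _).trans (le_max_right _ _)
  have hM₃ : diam (univ : Set Y) + 2 * ghDist Y Z - a ≤ M :=
    (le_max_right _ _).trans (le_max_right _ _)
  rw [abs_le]
  refine ⟨?_, by linarith [dist_nonneg (x := z) (y := z')]⟩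
  by_cases hqz : q z = q z'
  · have : dist (g z) (g z') ≤ c :=
      (dist_le_diam_of_mem isBounded_of_compactSpace (hq z) (hqz ▸ hq z')).trans (hCd _)
    linarith [dist_nonneg (x := x) (y := x')]
  · obtain ⟨i, j, hij, hi, hj⟩ := hsep hxz hxz' hqz
    linarith [hα i j hij x hi x' hj]

end GromovHausdorff

theorem stmt12_general {X Y I J : Type u}
    [MetricSpace X] [CompactSpace X] [Nonempty X]
    [MetricSpace Y] [CompactSpace Y] [Nonempty Y]
    (hext : 2 * GromovHausdorff.ghDist X Y = Metric.diam (Set.univ : Set X))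
    (hdiam : Metric.diam (Set.univ : Set X) = Metric.diam (Set.univ : Set Y))
    (hJI : Cardinal.mk J ≤ Cardinal.mk I)
    (D : I → Set X) (hDne : ∀ i, (D i).Nonempty) (hDcov : ⋃ i, D i = Set.univ)
    (a : ℝ) (ha : 0 < a)
    (hα : ∀ i j, i ≠ j → ∀ x ∈ D i, ∀ y ∈ D j, a ≤ dist x y)
    (C : J → Set Y) (hCcov : ⋃ j, C j = Set.univ)
    (c : ℝ) (hc : c < Metric.diam (Set.univ : Set Y))
    (hCd : ∀ j, Metric.diam (C j) ≤ c) :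
    ∀ (Z : Type v) [MetricSpace Z] [CompactSpace Z] [Nonempty Z],
      ¬ (0 < GromovHausdorff.ghDist Y Z ∧
          GromovHausdorff.ghDist X Z =
            GromovHausdorff.ghDist X Y + GromovHausdorff.ghDist Y Z) := by
  rintro Z _ _ _ ⟨hr, hXZ⟩
  have hbound := GromovHausdorff.two_mul_ghDist_le_of_partition_of_cover D hDne hDcov hα C hCcov
    hCd hJI (Z := Z)
  have hlt : max (diam (univ : Set X)) (max (c + 2 * GromovHausdorff.ghDist Y Z)
      (diam (univ : Set Y) + 2 * GromovHausdorff.ghDist Y Z - a)) <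
      2 * GromovHausdorff.ghDist X Z := by
    rw [hXZ]
    refine max_lt ?_ (max_lt ?_ ?_) <;> linarith
  exact hlt.not_ge hbound

/-- non-extendability in the Gromov–Hausdorff space of nonempty compact
metric spaces (with Mathlib's `GromovHausdorff.ghDist`). `X` and `Y` are mutually
hyperextreme (`2·ghDist(X,Y) = diam X = diam Y > 0`); the index types `I`, `J` play the
roles of the cardinals `n`, `m`; `a > 0` witnesses `α(D_X) > 0`, and the covering of `Y`
has all diameters bounded by some `c < diam Y`. Then no nonempty compact metric space `Z`
satisfies `ghDist(Y,Z) > 0` and `ghDist(X,Z) = ghDist(X,Y) + ghDist(Y,Z)`. -/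
theorem stmt12 {X Y I J : Type u}
    [MetricSpace X] [CompactSpace X] [Nonempty X]
    [MetricSpace Y] [CompactSpace Y] [Nonempty Y]
    (hext : 2 * GromovHausdorff.ghDist X Y = Metric.diam (Set.univ : Set X))
    (hdiam : Metric.diam (Set.univ : Set X) = Metric.diam (Set.univ : Set Y))
    (hpos : 0 < Metric.diam (Set.univ : Set X))
    (hI1 : 1 < Cardinal.mk I) (hIX : Cardinal.mk I ≤ Cardinal.mk X)
    (hJ1 : 1 < Cardinal.mk J) (hJY : Cardinal.mk J ≤ Cardinal.mk Y)
    (hJI : Cardinal.mk J ≤ Cardinal.mk I)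
    (D : I → Set X) (hDne : ∀ i, (D i).Nonempty) (hDcov : ⋃ i, D i = Set.univ)
    (hDdisj : Pairwise (Function.onFun Disjoint D))
    (a : ℝ) (ha : 0 < a)
    (hα : ∀ i j, i ≠ j → ∀ x ∈ D i, ∀ y ∈ D j, a ≤ dist x y)
    (C : J → Set Y) (hCne : ∀ j, (C j).Nonempty) (hCcov : ⋃ j, C j = Set.univ)
    (c : ℝ) (hc : c < Metric.diam (Set.univ : Set Y))
    (hCd : ∀ j, Metric.diam (C j) ≤ c) :
    ∀ (Z : Type v) [MetricSpace Z] [CompactSpace Z] [Nonempty Z],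
      ¬ (0 < GromovHausdorff.ghDist Y Z ∧
          GromovHausdorff.ghDist X Z =
            GromovHausdorff.ghDist X Y + GromovHausdorff.ghDist Y Z) :=
  stmt12_general hext hdiam hJI D hDne hDcov a ha hα C hCcov c hc hCd
end

section
/- Let Y be a bounded metric space with points y₁, y₂ such that d(y₁,y₂) = diam Y, and let 0 ≤ s₁ ≤ r₁ and 0 ≤ s₂ ≤ r₂. Then 2·d_GH( Z_{r₁,r₂}(y₁,y₂), Z_{s₁,s₂}(y₁,y₂) ) = (r₁ − s₁) + (r₂ − s₂). -/
open Metric Set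
open scoped ENNReal

/-- `Z` (together with the isometric embedding `ι` and the two points `z₁`, `z₂`) is the
two-point extension `Z_{r₁,r₂}(y₁,y₂)` of `Y`: every point of `Z` is either `ι y` or one
of `z₁`, `z₂`, with `dist z₁ z₂ = r₁ + dist y₁ y₂ + r₂` and
`dist (ι y) zᵢ = dist y yᵢ + rᵢ` (if `rᵢ = 0` the point `zᵢ` coincides with `ι yᵢ`). -/
structure IsTwoPointExt {Y Z : Type*} [MetricSpace Y] [MetricSpace Z]
    (y₁ y₂ : Y) (r₁ r₂ : ℝ) (ι : Y → Z) (z₁ z₂ : Z) : Prop where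
  isometry : Isometry ι
  covers : Set.range ι ∪ {z₁, z₂} = Set.univ
  dist_z₁_z₂ : dist z₁ z₂ = r₁ + dist y₁ y₂ + r₂
  dist_z₁ : ∀ y : Y, dist (ι y) z₁ = dist y y₁ + r₁
  dist_z₂ : ∀ y : Y, dist (ι y) z₂ = dist y y₂ + r₂

/-- for `0 ≤ s₁ ≤ r₁` and `0 ≤ s₂ ≤ r₂`,
`2·d_GH(Z_{r₁,r₂}(y₁,y₂), Z_{s₁,s₂}(y₁,y₂)) = (r₁ − s₁) + (r₂ − s₂)`. -/
theorem stmt16 {Y : Type*} [MetricSpace Y] [Nonempty Y]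
    (hYb : EMetric.diam (Set.univ : Set Y) ≠ ⊤)
    (y₁ y₂ : Y) (hdiam : dist y₁ y₂ = Metric.diam (Set.univ : Set Y))
    (r₁ r₂ s₁ s₂ : ℝ) (hs₁ : 0 ≤ s₁) (hsr₁ : s₁ ≤ r₁) (hs₂ : 0 ≤ s₂) (hsr₂ : s₂ ≤ r₂)
    {W₁ W₂ : Type*} [MetricSpace W₁] [MetricSpace W₂]
    (ι₁ : Y → W₁) (z₁ z₂ : W₁) (hW₁ : IsTwoPointExt y₁ y₂ r₁ r₂ ι₁ z₁ z₂)
    (ι₂ : Y → W₂) (w₁ w₂ : W₂) (hW₂ : IsTwoPointExt y₁ y₂ s₁ s₂ ι₂ w₁ w₂) :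
    2 * ghDist W₁ W₂ = ENNReal.ofReal ((r₁ - s₁) + (r₂ - s₂)) := by
  have hYbd : Bornology.IsBounded (Set.univ : Set Y) :=
    Metric.isBounded_iff_ediam_ne_top.2 hYb
  set D := dist y₁ y₂ with hDdef
  have hdle : ∀ y y' : Y, dist y y' ≤ D := fun y y' =>
    le_of_le_of_eq (Metric.dist_le_diam_of_mem hYbd trivial trivial) hdiam.symm
  set t : ℝ := (r₁ - s₁) + (r₂ - s₂) with htdef
  have ht0 : 0 ≤ t := add_nonneg (sub_nonneg.2 hsr₁) (sub_nonneg.2 hsr₂)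
  -- case analysis on points of the extensions
  have hcase₁ : ∀ x : W₁, (∃ y, x = ι₁ y) ∨ x = z₁ ∨ x = z₂ := fun x => by
    have hx : x ∈ Set.range ι₁ ∪ {z₁, z₂} := hW₁.covers ▸ Set.mem_univ x
    rcases hx with ⟨y, hy⟩ | (h | h)
    · exact Or.inl ⟨y, hy.symm⟩
    · exact Or.inr (Or.inl h)
    · exact Or.inr (Or.inr h)
  have hcase₂ : ∀ x : W₂, (∃ y, x = ι₂ y) ∨ x = w₁ ∨ x = w₂ := fun x => by
    have hx : x ∈ Set.range ι₂ ∪ {w₁, w₂} := hW₂.covers ▸ Set.mem_univ x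
    rcases hx with ⟨y, hy⟩ | (h | h)
    · exact Or.inl ⟨y, hy.symm⟩
    · exact Or.inr (Or.inl h)
    · exact Or.inr (Or.inr h)
  -- diameter bound in W₂
  have hbd₂ : ∀ a b : W₂, dist a b ≤ s₁ + D + s₂ := by
    intro a b
    rcases hcase₂ a with ⟨y, rfl⟩ | (rfl | rfl) <;>
      rcases hcase₂ b with ⟨y', rfl⟩ | (rfl | rfl)
    · rw [hW₂.isometry.dist_eq]
      have := hdle y y'; linarith
    · rw [hW₂.dist_z₁]; have := hdle y y₁; linarith
    · rw [hW₂.dist_z₂]; have := hdle y y₂; linarith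
    · rw [dist_comm, hW₂.dist_z₁]; have := hdle y' y₁; linarith
    · simp; linarith [dist_nonneg (x := y₁) (y := y₂)]
    · rw [hW₂.dist_z₁_z₂]
    · rw [dist_comm, hW₂.dist_z₂]; have := hdle y' y₂; linarith
    · rw [dist_comm, hW₂.dist_z₁_z₂]
    · simp; linarith [dist_nonneg (x := y₁) (y := y₂)]
  -- the candidate correspondence
  set R₀ : Set (W₁ × W₂) :=
    {p | ∃ y : Y, p = (ι₁ y, ι₂ y)} ∪ {(z₁, w₁), (z₂, w₂)} with hR₀def
  have hR₀corr : IsCorrespondence R₀ := by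
    constructor
    · intro x
      rcases hcase₁ x with ⟨y, rfl⟩ | (rfl | rfl)
      · exact ⟨ι₂ y, Or.inl ⟨y, rfl⟩⟩
      · exact ⟨w₁, Or.inr (Or.inl rfl)⟩
      · exact ⟨w₂, Or.inr (Or.inr rfl)⟩
    · intro x
      rcases hcase₂ x with ⟨y, rfl⟩ | (rfl | rfl)
      · exact ⟨ι₁ y, Or.inl ⟨y, rfl⟩⟩
      · exact ⟨z₁, Or.inr (Or.inl rfl)⟩
      · exact ⟨z₂, Or.inr (Or.inr rfl)⟩
  -- distortion of R₀ is at most t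
  have hdis : corrDistortion R₀ ≤ ENNReal.ofReal t := by
    refine iSup₂_le fun p hp => iSup₂_le fun q hq => ?_
    refine ENNReal.ofReal_le_ofReal ?_
    rw [abs_le]
    rcases hp with ⟨y, rfl⟩ | (rfl | rfl) <;>
      rcases hq with ⟨y', rfl⟩ | (rfl | rfl) <;> simp only
    · rw [hW₁.isometry.dist_eq, hW₂.isometry.dist_eq]; constructor <;> linarith
    · rw [hW₁.dist_z₁, hW₂.dist_z₁]; constructor <;> linarith
    · rw [hW₁.dist_z₂, hW₂.dist_z₂]; constructor <;> linarith
    · rw [dist_comm z₁, dist_comm w₁, hW₁.dist_z₁, hW₂.dist_z₁]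
      constructor <;> linarith
    · simp; linarith
    · rw [hW₁.dist_z₁_z₂, hW₂.dist_z₁_z₂]; constructor <;> linarith
    · rw [dist_comm z₂, dist_comm w₂, hW₁.dist_z₂, hW₂.dist_z₂]
      constructor <;> linarith
    · rw [dist_comm z₂, dist_comm w₂, hW₁.dist_z₁_z₂, hW₂.dist_z₁_z₂]
      constructor <;> linarith
    · simp; linarith
  -- lower bound for every correspondence
  have hlow : ∀ R : Set (W₁ × W₂), IsCorrespondence R →
      ENNReal.ofReal t ≤ corrDistortion R := by
    intro R hR
    obtain ⟨a, ha⟩ := hR.1 z₁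
    obtain ⟨b, hb⟩ := hR.1 z₂
    have key : t ≤ |dist (z₁, a).1 (z₂, b).1 - dist (z₁, a).2 (z₂, b).2| := by
      simp only
      rw [hW₁.dist_z₁_z₂]
      have h1 := hbd₂ a b
      have hD' : D = dist y₁ y₂ := rfl
      exact le_abs.2 (Or.inl (by linarith))
    calc ENNReal.ofReal t
        ≤ ENNReal.ofReal |dist (z₁, a).1 (z₂, b).1 - dist (z₁, a).2 (z₂, b).2| :=
          ENNReal.ofReal_le_ofReal key
      _ ≤ ⨆ q ∈ R, ENNReal.ofReal |dist (z₁, a).1 q.1 - dist (z₁, a).2 q.2| :=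
          le_iSup₂ (f := fun q (_ : q ∈ R) =>
            ENNReal.ofReal |dist (z₁, a).1 q.1 - dist (z₁, a).2 q.2|) (z₂, b) hb
      _ ≤ corrDistortion R :=
          le_iSup₂ (f := fun p (_ : p ∈ R) =>
            ⨆ q ∈ R, ENNReal.ofReal |dist p.1 q.1 - dist p.2 q.2|) (z₁, a) ha
  have hinf : (⨅ (R : Set (W₁ × W₂)) (_ : IsCorrespondence R), corrDistortion R) =
      ENNReal.ofReal t := by
    refine le_antisymm ?_ (le_iInf₂ hlow)
    exact le_trans (iInf₂_le R₀ hR₀corr) hdis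
  rw [ghDist, hinf]
  rw [ENNReal.mul_div_cancel' (by norm_num) (by norm_num)]
end

section
/- Let X and Y be bounded metric spaces with Y subextreme with respect to X (d_GH(X,Y) > 0 and 2·d_GH(X,Y) = diam Y − diam X), and suppose Y contains points y₁, y₂ with d(y₁,y₂) = diam Y. Then for any r₁, r₂ ≥ 0, the two-point extension Z = Z_{r₁,r₂}(y₁,y₂) satisfies 2·d_GH(X,Z) = diam Z − diam X = 2·d_GH(X,Y) + 2·d_GH(Y,Z); in particular Y lies between X and Z, so the metric segment [X,Y] can be extended beyond Y to Z (when r₁ + r₂ > 0). -/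
open Metric Set
open scoped ENNReal

lemma ofReal_abs_le_corrDistortion {X Y : Type*} [MetricSpace X] [MetricSpace Y]
    {R : Set (X × Y)} {p q : X × Y} (hp : p ∈ R) (hq : q ∈ R) :
    ENNReal.ofReal |dist p.1 q.1 - dist p.2 q.2| ≤ corrDistortion R :=
  le_iSup₂_of_le p hp (le_iSup₂_of_le q hq le_rfl)

lemma corrDistortion_le {X Y : Type*} [MetricSpace X] [MetricSpace Y]
    {R : Set (X × Y)} {c : ℝ}
    (hc : ∀ p ∈ R, ∀ q ∈ R, |dist p.1 q.1 - dist p.2 q.2| ≤ c) :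
    corrDistortion R ≤ ENNReal.ofReal c :=
  iSup₂_le fun p hp => iSup₂_le fun q hq => ENNReal.ofReal_le_ofReal (hc p hp q hq)

lemma gh2_lower {X B : Type*} [MetricSpace X] [MetricSpace B]
    (hXb : Bornology.IsBounded (univ : Set X)) (b b' : B)
    {R : Set (X × B)} (hR : IsCorrespondence R) :
    ENNReal.ofReal (dist b b' - Metric.diam (univ : Set X)) ≤ corrDistortion R := by
  obtain ⟨x, hx⟩ := hR.2 b
  obtain ⟨x', hx'⟩ := hR.2 b'
  refine le_trans ?_ (ofReal_abs_le_corrDistortion hx hx')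
  apply ENNReal.ofReal_le_ofReal
  have hd : dist x x' ≤ Metric.diam (univ : Set X) :=
    Metric.dist_le_diam_of_mem hXb trivial trivial
  calc dist b b' - Metric.diam (univ : Set X) ≤ dist b b' - dist x x' := by linarith
    _ ≤ |dist x x' - dist b b'| := by rw [abs_sub_comm]; exact le_abs_self _

lemma comp_corr {X Y Z : Type*} {R₁ : Set (X × Y)} {R₂ : Set (Y × Z)}
    (h₁ : IsCorrespondence R₁) (h₂ : IsCorrespondence R₂) :
    IsCorrespondence {p : X × Z | ∃ y, (p.1, y) ∈ R₁ ∧ (y, p.2) ∈ R₂} := by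
  constructor
  · intro x
    obtain ⟨y, hy⟩ := h₁.1 x
    obtain ⟨z, hz⟩ := h₂.1 y
    exact ⟨z, y, hy, hz⟩
  · intro z
    obtain ⟨y, hy⟩ := h₂.2 z
    obtain ⟨x, hx⟩ := h₁.2 y
    exact ⟨x, y, hx, hy⟩

lemma comp_dist {X Y Z : Type*} [MetricSpace X] [MetricSpace Y] [MetricSpace Z]
    {R₁ : Set (X × Y)} {R₂ : Set (Y × Z)} :
    corrDistortion {p : X × Z | ∃ y, (p.1, y) ∈ R₁ ∧ (y, p.2) ∈ R₂} ≤
      corrDistortion R₁ + corrDistortion R₂ := by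
  refine iSup₂_le fun p hp => iSup₂_le fun q hq => ?_
  obtain ⟨y, hy₁, hy₂⟩ := hp
  obtain ⟨y', hy'₁, hy'₂⟩ := hq
  have habs : |dist p.1 q.1 - dist p.2 q.2| ≤
      |dist p.1 q.1 - dist y y'| + |dist y y' - dist p.2 q.2| := abs_sub_le _ _ _
  calc ENNReal.ofReal |dist p.1 q.1 - dist p.2 q.2|
      ≤ ENNReal.ofReal (|dist p.1 q.1 - dist y y'| + |dist y y' - dist p.2 q.2|) :=
        ENNReal.ofReal_le_ofReal habs
    _ = ENNReal.ofReal |dist p.1 q.1 - dist y y'| +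
        ENNReal.ofReal |dist y y' - dist p.2 q.2| :=
        ENNReal.ofReal_add (abs_nonneg _) (abs_nonneg _)
    _ ≤ corrDistortion R₁ + corrDistortion R₂ :=
        add_le_add (ofReal_abs_le_corrDistortion (p := (p.1, y)) (q := (q.1, y')) hy₁ hy'₁)
          (ofReal_abs_le_corrDistortion (p := (y, p.2)) (q := (y', q.2)) hy₂ hy'₂)

lemma gh2_triangle (X Y Z : Type*) [MetricSpace X] [MetricSpace Y] [MetricSpace Z] :
    (⨅ (R : Set (X × Z)) (_ : IsCorrespondence R), corrDistortion R) ≤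
    (⨅ (R : Set (X × Y)) (_ : IsCorrespondence R), corrDistortion R) +
    (⨅ (R : Set (Y × Z)) (_ : IsCorrespondence R), corrDistortion R) := by
  simp_rw [ENNReal.iInf_add, ENNReal.add_iInf]
  refine le_iInf fun R₁ => le_iInf fun h₁ => le_iInf fun R₂ => le_iInf fun h₂ => ?_
  exact le_trans (iInf₂_le _ (comp_corr h₁ h₂)) comp_dist

def twoPtCorr {Y Z : Type*} (ι : Y → Z) (y₁ y₂ : Y) (z₁ z₂ : Z) : Set (Y × Z) :=
  {p | p.2 = ι p.1} ∪ {(y₁, z₁), (y₂, z₂)}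

lemma two_ghDist (X Y : Type*) [MetricSpace X] [MetricSpace Y] :
    2 * ghDist X Y = ⨅ (R : Set (X × Y)) (_ : IsCorrespondence R), corrDistortion R := by
  rw [ghDist, mul_comm, ENNReal.div_mul_cancel (by norm_num) (by norm_num)]


/-- if `Y` is subextreme with respect to `X` and `y₁, y₂ ∈ Y` realize
`diam Y`, then for any `r₁, r₂ ≥ 0` the two-point extension `Z = Z_{r₁,r₂}(y₁,y₂)`
satisfies `2·d_GH(X,Z) = diam Z − diam X = 2·d_GH(X,Y) + 2·d_GH(Y,Z)`; in particular `Y`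
lies between `X` and `Z`, so `[X,Y]` extends beyond `Y` to `Z` (when `r₁ + r₂ > 0`). -/
theorem stmt17 {X Y : Type*} [MetricSpace X] [MetricSpace Y] [Nonempty X] [Nonempty Y]
    (hXb : EMetric.diam (Set.univ : Set X) ≠ ⊤)
    (hYb : EMetric.diam (Set.univ : Set Y) ≠ ⊤)
    (hpos : 0 < ghDist X Y)
    (hsub : 2 * ghDist X Y =
      ENNReal.ofReal (Metric.diam (Set.univ : Set Y) - Metric.diam (Set.univ : Set X)))
    (y₁ y₂ : Y) (hdiam : dist y₁ y₂ = Metric.diam (Set.univ : Set Y))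
    (r₁ r₂ : ℝ) (hr₁ : 0 ≤ r₁) (hr₂ : 0 ≤ r₂)
    {Z : Type*} [MetricSpace Z]
    (ι : Y → Z) (z₁ z₂ : Z) (hZ : IsTwoPointExt y₁ y₂ r₁ r₂ ι z₁ z₂) :
    2 * ghDist X Z =
      ENNReal.ofReal (Metric.diam (Set.univ : Set Z) - Metric.diam (Set.univ : Set X)) ∧
    2 * ghDist X Z = 2 * ghDist X Y + 2 * ghDist Y Z ∧
    ghDist X Y + ghDist Y Z = ghDist X Z ∧ ghDist X Z ≠ ⊤ := by
  have hXbdd : Bornology.IsBounded (univ : Set X) :=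
    Metric.isBounded_iff_ediam_ne_top.2 hXb
  have hYbdd : Bornology.IsBounded (univ : Set Y) :=
    Metric.isBounded_iff_ediam_ne_top.2 hYb
  set dX := Metric.diam (univ : Set X) with hdX
  set dY := Metric.diam (univ : Set Y) with hdY'
  -- positivity of dY - dX
  have h2pos : 0 < 2 * ghDist X Y := by
    have : (2 : ℝ≥0∞) ≠ 0 := by norm_num
    exact ENNReal.mul_pos this hpos.ne'
  have hdYX : 0 < dY - dX := ENNReal.ofReal_pos.1 (hsub ▸ h2pos)
  have hdY : ∀ y y' : Y, dist y y' ≤ dist y₁ y₂ := by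
    intro y y'; rw [hdiam]; exact Metric.dist_le_diam_of_mem hYbdd trivial trivial
  have hcase : ∀ z : Z, (∃ y, ι y = z) ∨ z = z₁ ∨ z = z₂ := by
    intro z
    have hz : z ∈ range ι ∪ {z₁, z₂} := hZ.covers ▸ mem_univ z
    rcases hz with h | h
    · exact Or.inl h
    · simp only [mem_insert_iff, mem_singleton_iff] at h
      exact Or.inr h
  -- distances in Z are bounded by r₁ + dist y₁ y₂ + r₂
  have key : ∀ a b : Z, dist a b ≤ r₁ + dist y₁ y₂ + r₂ := by
    intro a b
    rcases hcase a with ⟨y, rfl⟩ | rfl | rfl <;> rcases hcase b with ⟨y', rfl⟩ | rfl | rfl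
    · rw [hZ.isometry.dist_eq]; have := hdY y y'; linarith
    · rw [hZ.dist_z₁]; have := hdY y y₁; linarith
    · rw [hZ.dist_z₂]; have := hdY y y₂; linarith
    · rw [dist_comm, hZ.dist_z₁]; have := hdY y' y₁; linarith
    · rw [dist_self]; have := dist_nonneg (x := y₁) (y := y₂); linarith
    · rw [hZ.dist_z₁_z₂]
    · rw [dist_comm, hZ.dist_z₂]; have := hdY y' y₂; linarith
    · rw [dist_comm, hZ.dist_z₁_z₂]
    · rw [dist_self]; have := dist_nonneg (x := y₁) (y := y₂); linarith
  have htotnn : 0 ≤ r₁ + dist y₁ y₂ + r₂ := by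
    have := dist_nonneg (x := y₁) (y := y₂); linarith
  have hZbdd : Bornology.IsBounded (univ : Set Z) :=
    Metric.isBounded_iff.2 ⟨_, fun a _ b _ => key a b⟩
  have hdiamZ : Metric.diam (univ : Set Z) = r₁ + dist y₁ y₂ + r₂ := by
    refine le_antisymm (Metric.diam_le_of_forall_dist_le htotnn fun a _ b _ => key a b) ?_
    rw [← hZ.dist_z₁_z₂]
    exact Metric.dist_le_diam_of_mem hZbdd trivial trivial
  -- the two-point correspondence between Y and Z
  set S : Set (Y × Z) := twoPtCorr ι y₁ y₂ z₁ z₂ with hSdef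
  have hScorr : IsCorrespondence S := by
    constructor
    · intro y; exact ⟨ι y, Or.inl rfl⟩
    · intro z
      rcases hcase z with ⟨y, rfl⟩ | rfl | rfl
      · exact ⟨y, Or.inl rfl⟩
      · exact ⟨y₁, Or.inr (by simp [twoPtCorr])⟩
      · exact ⟨y₂, Or.inr (by simp [twoPtCorr])⟩
  have hSdis : ∀ p ∈ S, ∀ q ∈ S, |dist p.1 q.1 - dist p.2 q.2| ≤ r₁ + r₂ := by
    rintro ⟨a, b⟩ hp ⟨c, d⟩ hq
    simp only [hSdef, twoPtCorr, mem_union, mem_setOf_eq, mem_insert_iff,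
      mem_singleton_iff, Prod.mk.injEq] at hp hq
    rcases hp with hb | ⟨ha, hb⟩ | ⟨ha, hb⟩ <;>
        rcases hq with hd | ⟨hc, hd⟩ | ⟨hc, hd⟩
    · rw [hb, hd, hZ.isometry.dist_eq, sub_self, abs_zero]; linarith
    · rw [hb, hc, hd, hZ.dist_z₁, abs_le]; constructor <;> linarith
    · rw [hb, hc, hd, hZ.dist_z₂, abs_le]; constructor <;> linarith
    · rw [ha, hb, hd, dist_comm z₁ (ι c), hZ.dist_z₁, dist_comm y₁ c, abs_le]
      constructor <;> linarith
    · rw [ha, hb, hc, hd, dist_self, dist_self, sub_self, abs_zero]; linarith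
    · rw [ha, hb, hc, hd, hZ.dist_z₁_z₂, abs_le]; constructor <;> linarith
    · rw [ha, hb, hd, dist_comm z₂ (ι c), hZ.dist_z₂, dist_comm y₂ c, abs_le]
      constructor <;> linarith
    · rw [ha, hb, hc, hd, dist_comm z₂ z₁, hZ.dist_z₁_z₂, dist_comm y₂ y₁, abs_le]
      constructor <;> linarith
    · rw [ha, hb, hc, hd, dist_self, dist_self, sub_self, abs_zero]; linarith
  -- gh2 values
  have hghYZ : (⨅ (R : Set (Y × Z)) (_ : IsCorrespondence R), corrDistortion R) =
      ENNReal.ofReal (r₁ + r₂) := by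
    refine le_antisymm (le_trans (iInf₂_le S hScorr) (corrDistortion_le hSdis)) ?_
    refine le_iInf fun R => le_iInf fun hR => ?_
    have := gh2_lower hYbdd z₁ z₂ hR
    rwa [hZ.dist_z₁_z₂, hdiam, show r₁ + dY + r₂ - dY = r₁ + r₂ by ring] at this
  have hghXY : (⨅ (R : Set (X × Y)) (_ : IsCorrespondence R), corrDistortion R) =
      ENNReal.ofReal (dY - dX) := by rw [← two_ghDist, hsub]
  have hghXZ : (⨅ (R : Set (X × Z)) (_ : IsCorrespondence R), corrDistortion R) =
      ENNReal.ofReal (dY - dX) + ENNReal.ofReal (r₁ + r₂) := by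
    refine le_antisymm ?_ ?_
    · calc _ ≤ _ := gh2_triangle X Y Z
        _ = _ := by rw [hghXY, hghYZ]
    · refine le_iInf fun R => le_iInf fun hR => ?_
      have := gh2_lower hXbdd z₁ z₂ hR
      rw [hZ.dist_z₁_z₂, hdiam] at this
      rwa [← ENNReal.ofReal_add (by linarith) (by linarith),
        show dY - dX + (r₁ + r₂) = r₁ + dY + r₂ - dX by ring]
  have hsum : ENNReal.ofReal (dY - dX) + ENNReal.ofReal (r₁ + r₂) =
      ENNReal.ofReal (Metric.diam (univ : Set Z) - dX) := by
    rw [hdiamZ, hdiam, ← ENNReal.ofReal_add (by linarith) (by linarith)]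
    ring_nf
  refine ⟨?_, ?_, ?_, ?_⟩
  · rw [two_ghDist, hghXZ, hsum]
  · rw [two_ghDist X Z, two_ghDist X Y, two_ghDist Y Z, hghXZ, hghXY, hghYZ]
  · rw [ghDist, ghDist, ghDist, hghXZ, hghXY, hghYZ, ENNReal.div_add_div_same]
  · rw [ghDist, hghXZ]
    exact (ENNReal.div_lt_top (by simp [ENNReal.add_ne_top]) (by norm_num)).ne
end
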